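/- arXiv:1612.07623 — 5 statements merged into one kernel-verified Lean document; each statement's English description precedes it below -/
import Mathlib

section
/- Let (X,d) be a metric space, φ : X → ℝ a Kantorovich potential, and γ a φ-Kantorovich geodesic. Then for all s, r ∈ [0,1], φ_s(γ_s) − φ_r(γ_r) = (r − s)·ℓ(γ)²/2; in particular, for s ≠ r this common value equals d(γ_s,γ_r)²/(2(r−s)). -/
/- The potential `φ_t` along `γ` is pinned down by two inequalities. Taking `y = γ₀` in the
infimum defining `φ_t(γ_t)` gives `φ_t(γ_t) ≥ φ(γ₀) - t ℓ²/2`. Conversely, for every `y`,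
`φ(y) ≤ d(y,γ₁)²/2 - φ^c(γ₁)` since `φ = (φ^c)^c`, and by the triangle inequality through `γ_t`
and convexity of the square, `d(y,γ₁)² ≤ (d(γ_t,y) + (1-t)ℓ)² ≤ d(γ_t,y)²/t + (1-t)ℓ²`;
with `φ(γ₀) + φ^c(γ₁) = ℓ²/2` this gives the reverse bound. Hence
`φ_t(γ_t) = φ(γ₀) - t ℓ²/2` is affine in `t`, and the geodesic property turns
`ℓ²` into `d(γ_s,γ_r)²/(s-r)²`. -/

/-- `ψ` is pointwise the `c`-transform of `φ` for the cost `c = d²/2`: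
at every point `x`, `ψ x` is a genuine (finite) infimum of `d(x,y)²/2 - φ(y)` over `y`. -/
def IsCTransform {X : Type*} [MetricSpace X] (φ ψ : X → ℝ) : Prop :=
  ∀ x : X, IsGLB {v : ℝ | ∃ y : X, v = dist x y ^ 2 / 2 - φ y} (ψ x)

/-- `φ` is a Kantorovich potential with (real-valued) conjugate potential `φc`. -/
def IsKantorovichPair {X : Type*} [MetricSpace X] (φ φc : X → ℝ) : Prop :=
  IsCTransform φ φc ∧ IsCTransform φc φ

/-- A constant-speed geodesic parametrized on `[0,1]`. -/
def IsGeodesic {X : Type*} [MetricSpace X] (γ : ℝ → X) : Prop :=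
  ∀ s ∈ Set.Icc (0:ℝ) 1, ∀ t ∈ Set.Icc (0:ℝ) 1,
    dist (γ s) (γ t) = |s - t| * dist (γ 0) (γ 1)

/-- A `φ`-Kantorovich geodesic: a geodesic with `φ(γ₀) + φ^c(γ₁) = ℓ(γ)²/2`,
where `ℓ(γ) = d(γ₀,γ₁)`. -/
def IsKantorovichGeodesic {X : Type*} [MetricSpace X] (φ φc : X → ℝ) (γ : ℝ → X) : Prop :=
  IsGeodesic γ ∧ φ (γ 0) + φc (γ 1) = dist (γ 0) (γ 1) ^ 2 / 2

/-- A metric space is geodesic if every pair of points is joined by a geodesic. -/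
def IsGeodesicSpace (X : Type*) [MetricSpace X] : Prop :=
  ∀ x y : X, ∃ γ : ℝ → X, IsGeodesic γ ∧ γ 0 = x ∧ γ 1 = y

/-- The interpolating intermediate-time Kantorovich potential
`φ_t(x) = -inf_y (d(x,y)²/(2t) - φ(y))` for `t ≠ 0`, and `φ_0 = φ`. -/
noncomputable def interpPotential {X : Type*} [MetricSpace X] (φ : X → ℝ) (t : ℝ) (x : X) : ℝ :=
  if t = 0 then φ x
  else -sInf {v : ℝ | ∃ y : X, v = dist x y ^ 2 / (2 * t) - φ y}

/-- The time-reversed interpolating Kantorovich potential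
`φ̄_t(x) = inf_y (d(x,y)²/(2(1-t)) - φ^c(y))` for `t ≠ 1`, and `φ̄_1 = -φ^c`. -/
noncomputable def reversePotential {X : Type*} [MetricSpace X] (φc : X → ℝ) (t : ℝ) (x : X) : ℝ :=
  if t = 1 then -φc x
  else sInf {v : ℝ | ∃ y : X, v = dist x y ^ 2 / (2 * (1 - t)) - φc y}

lemma add_mul_sq_le_div_add {a L t : ℝ} (ht₀ : 0 < t) (ht₁ : t ≤ 1) :
    (a + (1 - t) * L) ^ 2 ≤ a ^ 2 / t + (1 - t) * L ^ 2 := by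
  have gap_nonneg : 0 ≤ (1 - t) * (a - t * L) ^ 2 / t := by
    have : 0 ≤ 1 - t := by linarith
    positivity
  have gap_eq : a ^ 2 / t + (1 - t) * L ^ 2 - (a + (1 - t) * L) ^ 2
      = (1 - t) * (a - t * L) ^ 2 / t := by
    field_simp
    ring
  linarith

section

variable {X : Type*} [MetricSpace X]

lemma IsCTransform.le_sub {φ ψ : X → ℝ} (h : IsCTransform φ ψ)
    (x y : X) : ψ x ≤ dist x y ^ 2 / 2 - φ y :=
  (h x).1 ⟨y, rfl⟩

lemma IsGeodesic.dist_zero {γ : ℝ → X} (hγ : IsGeodesic γ)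
    {t : ℝ} (ht : t ∈ Set.Icc (0:ℝ) 1) : dist (γ t) (γ 0) = t * dist (γ 0) (γ 1) := by
  rw [hγ t ht 0 (Set.left_mem_Icc.2 zero_le_one), sub_zero, abs_of_nonneg ht.1]

lemma IsGeodesic.dist_one {γ : ℝ → X} (hγ : IsGeodesic γ)
    {t : ℝ} (ht : t ∈ Set.Icc (0:ℝ) 1) : dist (γ t) (γ 1) = (1 - t) * dist (γ 0) (γ 1) := by
  rw [hγ t ht 1 (Set.right_mem_Icc.2 zero_le_one), abs_sub_comm, abs_of_nonneg (sub_nonneg.2 ht.2)]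

lemma interpPotential_eq_neg_of_isLeast {φ : X → ℝ} {t : ℝ}
    (ht : t ≠ 0) {x : X} {m : ℝ}
    (hm : IsLeast {v : ℝ | ∃ y : X, v = dist x y ^ 2 / (2 * t) - φ y} m) :
    interpPotential φ t x = -m := by
  rw [interpPotential, if_neg ht, hm.csInf_eq]

theorem interpPotential_kantorovichGeodesic {φ φc : X → ℝ}
    (hφ : IsCTransform φc φ) {γ : ℝ → X} (hγ : IsKantorovichGeodesic φ φc γ)
    {t : ℝ} (ht : t ∈ Set.Icc (0:ℝ) 1) :
    interpPotential φ t (γ t) = φ (γ 0) - t * (dist (γ 0) (γ 1) ^ 2 / 2) := by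
  obtain ⟨hgeod, hend⟩ := hγ
  rcases eq_or_ne t 0 with rfl | ht0
  · simp [interpPotential]
  have htpos : 0 < t := lt_of_le_of_ne ht.1 (Ne.symm ht0)
  set L := dist (γ 0) (γ 1) with hL
  rw [interpPotential_eq_neg_of_isLeast ht0 (m := t * (L ^ 2 / 2) - φ (γ 0)), neg_sub]
  refine ⟨⟨γ 0, ?_⟩, ?_⟩
  · rw [hgeod.dist_zero ht, ← hL]
    field_simp
  rintro _ ⟨y, rfl⟩
  have htri : dist y (γ 1) ≤ dist (γ t) y + (1 - t) * L := by
    calc dist y (γ 1) ≤ dist y (γ t) + dist (γ t) (γ 1) := dist_triangle _ _ _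
      _ = dist (γ t) y + (1 - t) * L := by rw [dist_comm, hgeod.dist_one ht]
  have hsq : dist y (γ 1) ^ 2 ≤ dist (γ t) y ^ 2 / t + (1 - t) * L ^ 2 :=
    (pow_le_pow_left₀ dist_nonneg htri 2).trans (add_mul_sq_le_div_add htpos ht.2)
  have hφy := hφ.le_sub y (γ 1)
  have hdiv : dist (γ t) y ^ 2 / (2 * t) = dist (γ t) y ^ 2 / t / 2 := by
    rw [div_div, mul_comm]
  rw [hdiv]
  linarith

end

/-- For a Kantorovich potential `φ` and a `φ`-Kantorovich geodesic `γ`, for all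
`s, r ∈ [0,1]` one has `φ_s(γ_s) - φ_r(γ_r) = (r-s)·ℓ(γ)²/2`; in particular, for
`s ≠ r` this common value equals `d(γ_s,γ_r)²/(2(r-s))`. -/
theorem statement0 {X : Type*} [MetricSpace X] (φ φc : X → ℝ)
    (hpair : IsKantorovichPair φ φc) (γ : ℝ → X)
    (hγ : IsKantorovichGeodesic φ φc γ)
    (s : ℝ) (hs : s ∈ Set.Icc (0:ℝ) 1) (r : ℝ) (hr : r ∈ Set.Icc (0:ℝ) 1) :
    interpPotential φ s (γ s) - interpPotential φ r (γ r)
        = (r - s) * (dist (γ 0) (γ 1) ^ 2 / 2) ∧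
      (s ≠ r →
        interpPotential φ s (γ s) - interpPotential φ r (γ r)
          = dist (γ s) (γ r) ^ 2 / (2 * (r - s))) := by
  have hdiff : interpPotential φ s (γ s) - interpPotential φ r (γ r)
      = (r - s) * (dist (γ 0) (γ 1) ^ 2 / 2) := by
    rw [interpPotential_kantorovichGeodesic hpair.2 hγ hs,
      interpPotential_kantorovichGeodesic hpair.2 hγ hr]
    ring
  refine ⟨hdiff, fun hne => ?_⟩
  have hrs : r - s ≠ 0 := sub_ne_zero.2 hne.symm
  rw [hdiff, hγ.1 s hs r hr, mul_pow, sq_abs, ← neg_sub r s, neg_sq]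
  field_simp
end

section
/- Let (X,d) be a proper geodesic metric space, φ : X → ℝ a Kantorovich potential, and t ∈ (0,1). Then φ_t(x) ≤ φ̄_t(x) for every x ∈ X, and φ_t(x) = φ̄_t(x) holds if and only if there exists a φ-Kantorovich geodesic γ with γ_t = x. -/
/-!
For `0 < t < 1` one has `(a + b)²/2 ≤ a²/(2t) + b²/(2(1-t))`, with equality iff `a = t (a + b)`.
Combined with `φ y + φ^c z ≤ d(y,z)²/2 ≤ (d(x,y) + d(x,z))²/2` this gives `φ_t ≤ φ̄_t`. At a
point `x` of equality, take minimizers `y`, `z` of the two infima (they exist because `φ`, `φ^c`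
are upper semicontinuous and the quadratic term is coercive on a proper space): all the
inequalities are equalities, so `d(x,y) = t d(y,z)`, `d(x,z) = (1-t) d(y,z)` and the pair `(y,z)`
is optimal, and gluing geodesics `y → x → z` gives the Kantorovich geodesic. Conversely the
endpoints of a Kantorovich geodesic through `x` are competitors realizing equality.
-/

open Set

lemma sq_div_add_sq_div_eq {a b t : ℝ} (ht0 : t ≠ 0) (ht1 : 1 - t ≠ 0) :
    a ^ 2 / (2 * t) + b ^ 2 / (2 * (1 - t)) =
      (a + b) ^ 2 / 2 + ((1 - t) * a - t * b) ^ 2 / (2 * t * (1 - t)) := by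
  field_simp
  ring

lemma add_sq_div_two_le {a b t : ℝ} (ht0 : 0 < t) (ht1 : t < 1) :
    (a + b) ^ 2 / 2 ≤ a ^ 2 / (2 * t) + b ^ 2 / (2 * (1 - t)) := by
  have h1t : 0 < 1 - t := sub_pos.2 ht1
  rw [sq_div_add_sq_div_eq ht0.ne' h1t.ne']
  have : 0 ≤ ((1 - t) * a - t * b) ^ 2 / (2 * t * (1 - t)) := by positivity
  linarith

/-- At `t = 0` or `t = 1` the degenerate term is `0 / 0 = 0`. -/
lemma sq_mul_div_add_sq_mul_div (d t : ℝ) :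
    (t * d) ^ 2 / (2 * t) + ((1 - t) * d) ^ 2 / (2 * (1 - t)) = d ^ 2 / 2 := by
  field_simp
  ring

lemma eq_mul_of_sq_div_add_sq_div_le {a b d t : ℝ} (ht0 : 0 < t) (ht1 : t < 1)
    (ha : 0 ≤ a) (hb : 0 ≤ b) (hd0 : 0 ≤ d) (hd : d ≤ a + b)
    (h : a ^ 2 / (2 * t) + b ^ 2 / (2 * (1 - t)) ≤ d ^ 2 / 2) :
    a = t * d ∧ b = (1 - t) * d := by
  have h1t : 0 < 1 - t := sub_pos.2 ht1
  rw [sq_div_add_sq_div_eq ht0.ne' h1t.ne'] at h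
  have hq : 0 ≤ ((1 - t) * a - t * b) ^ 2 / (2 * t * (1 - t)) := by positivity
  obtain rfl : d = a + b :=
    le_antisymm hd ((pow_le_pow_iff_left₀ (by positivity) hd0 two_ne_zero).1 (by linarith))
  have hsplit : (1 - t) * a - t * b = 0 := by
    have : ((1 - t) * a - t * b) ^ 2 / (2 * t * (1 - t)) = 0 := by linarith
    simpa [ht0.ne', h1t.ne'] using this
  exact ⟨by linear_combination hsplit, by linear_combination -hsplit⟩

section Metric

variable {X : Type*} [MetricSpace X]

lemma isGeodesic_of_dist_le {γ : ℝ → X}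
    (h : ∀ s ∈ Icc (0 : ℝ) 1, ∀ s' ∈ Icc (0 : ℝ) 1, s ≤ s' →
      dist (γ s) (γ s') ≤ (s' - s) * dist (γ 0) (γ 1)) :
    IsGeodesic γ := by
  have h0 : (0 : ℝ) ∈ Icc (0 : ℝ) 1 := left_mem_Icc.2 zero_le_one
  have h1 : (1 : ℝ) ∈ Icc (0 : ℝ) 1 := right_mem_Icc.2 zero_le_one
  have hord : ∀ s ∈ Icc (0 : ℝ) 1, ∀ s' ∈ Icc (0 : ℝ) 1, s ≤ s' →
      dist (γ s) (γ s') = (s' - s) * dist (γ 0) (γ 1) := by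
    intro s hs s' hs' hss
    refine le_antisymm (h s hs s' hs' hss) ?_
    have := dist_triangle4 (γ 0) (γ s) (γ s') (γ 1)
    have := h 0 h0 s hs hs.1
    have := h s' hs' 1 h1 hs'.2
    linarith
  intro s hs s' hs'
  rcases le_total s s' with hss | hss
  · rw [hord s hs s' hs' hss, abs_sub_comm, abs_of_nonneg (sub_nonneg.2 hss)]
  · rw [dist_comm, hord s' hs' s hs hss, abs_of_nonneg (sub_nonneg.2 hss)]

lemma IsGeodesic.dist_div {γ : ℝ → X} (hγ : IsGeodesic γ) {a s s' : ℝ} (ha : 0 < a)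
    (hs : s ∈ Icc 0 a) (hs' : s' ∈ Icc 0 a) :
    dist (γ (s / a)) (γ (s' / a)) = |s - s'| / a * dist (γ 0) (γ 1) := by
  have hmem : ∀ u ∈ Icc 0 a, u / a ∈ Icc (0 : ℝ) 1 := fun u hu =>
    ⟨div_nonneg hu.1 ha.le, (div_le_one ha).2 hu.2⟩
  rw [hγ _ (hmem s hs) _ (hmem s' hs'), ← sub_div, abs_div, abs_of_pos ha]

lemma IsGeodesicSpace.exists_geodesic_apply_eq (hgeo : IsGeodesicSpace X) {x y z : X} {t : ℝ}
    (ht0 : 0 < t) (ht1 : t < 1)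
    (hy : dist x y = t * dist y z) (hz : dist x z = (1 - t) * dist y z) :
    ∃ γ : ℝ → X, IsGeodesic γ ∧ γ 0 = y ∧ γ 1 = z ∧ γ t = x := by
  have h1t : 0 < 1 - t := sub_pos.2 ht1
  obtain ⟨γ₁, hγ₁, hγ₁0, hγ₁1⟩ := hgeo y x
  obtain ⟨γ₂, hγ₂, hγ₂0, hγ₂1⟩ := hgeo x z
  set c : ℝ → X := fun s => if s ≤ t then γ₁ (s / t) else γ₂ ((s - t) / (1 - t))
  have hc₁ : ∀ s ≤ t, c s = γ₁ (s / t) := fun s hs => if_pos hs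
  have hc₂ : ∀ s, t ≤ s → c s = γ₂ ((s - t) / (1 - t)) := by
    intro s hs
    rcases hs.eq_or_lt with hts | hlt
    · rw [← hts, hc₁ t le_rfl, div_self ht0.ne', sub_self, zero_div, hγ₁1, hγ₂0]
    · exact if_neg (not_le.2 hlt)
  have hc0 : c 0 = y := by rw [hc₁ 0 ht0.le, zero_div, hγ₁0]
  have hc1 : c 1 = z := by rw [hc₂ 1 ht1.le, div_self h1t.ne', hγ₂1]
  have hct : c t = x := by rw [hc₁ t le_rfl, div_self ht0.ne', hγ₁1]
  have hfirst : ∀ s ∈ Icc 0 t, ∀ s' ∈ Icc 0 t, s ≤ s' →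
      dist (c s) (c s') = (s' - s) * dist y z := by
    intro s hs s' hs' hss
    rw [hc₁ s hs.2, hc₁ s' hs'.2, hγ₁.dist_div ht0 hs hs', hγ₁0, hγ₁1, dist_comm y x, hy,
      abs_sub_comm, abs_of_nonneg (sub_nonneg.2 hss)]
    field_simp
  have hsecond : ∀ s ∈ Icc t 1, ∀ s' ∈ Icc t 1, s ≤ s' →
      dist (c s) (c s') = (s' - s) * dist y z := by
    intro s hs s' hs' hss
    have hshift : ∀ u ∈ Icc t 1, u - t ∈ Icc 0 (1 - t) := fun u hu =>
      ⟨sub_nonneg.2 hu.1, sub_le_sub_right hu.2 t⟩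
    rw [hc₂ s hs.1, hc₂ s' hs'.1, hγ₂.dist_div h1t (hshift s hs) (hshift s' hs'), hγ₂0, hγ₂1,
      hz, sub_sub_sub_cancel_right, abs_sub_comm, abs_of_nonneg (sub_nonneg.2 hss)]
    field_simp
  refine ⟨c, isGeodesic_of_dist_le ?_, hc0, hc1, hct⟩
  intro s hs s' hs' hss
  rw [hc0, hc1]
  rcases le_total s' t with hs't | hts'
  · exact (hfirst s ⟨hs.1, hss.trans hs't⟩ s' ⟨hs'.1, hs't⟩ hss).le
  rcases le_total t s with hts | hst
  · exact (hsecond s ⟨hts, hs.2⟩ s' ⟨hts', hs'.2⟩ hss).le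
  calc dist (c s) (c s') ≤ dist (c s) (c t) + dist (c t) (c s') := dist_triangle _ _ _
    _ = (s' - s) * dist y z := by
      rw [hfirst s ⟨hs.1, hst⟩ t ⟨ht0.le, le_rfl⟩ hst,
        hsecond t ⟨le_rfl, ht1.le⟩ s' ⟨hts', hs'.2⟩ hts']
      ring

variable {φ ψ : X → ℝ}

lemma IsCTransform.le (h : IsCTransform φ ψ) (x y : X) : ψ x + φ y ≤ dist x y ^ 2 / 2 := by
  have := (h x).1 ⟨y, rfl⟩
  linarith

lemma IsCTransform.upperSemicontinuous (h : IsCTransform φ ψ) : UpperSemicontinuous ψ := by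
  intro x c hc
  obtain ⟨v, ⟨y, rfl⟩, -, hv⟩ := (h x).exists_between hc
  have hcont : Continuous fun x' : X => dist x' y ^ 2 / 2 - φ y := by fun_prop
  filter_upwards [hcont.continuousAt.eventually (gt_mem_nhds hv)] with x' hx'
  exact ((h x').1 ⟨y, rfl⟩).trans_lt hx'

lemma LowerSemicontinuous.exists_forall_le_of_isBounded [ProperSpace X] {f : X → ℝ}
    (hf : LowerSemicontinuous f) (x₀ : X) (hb : Bornology.IsBounded {x | f x ≤ f x₀}) :
    ∃ x, ∀ y, f x ≤ f y := by
  have hK : IsCompact {x | f x ≤ f x₀} :=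
    Metric.isCompact_of_isClosed_isBounded (hf.isClosed_preimage (f x₀)) hb
  obtain ⟨x, hx, hmin⟩ := (hf.lowerSemicontinuousOn _).exists_isMinOn ⟨x₀, le_refl (f x₀)⟩ hK
  refine ⟨x, fun y => ?_⟩
  by_cases hy : f y ≤ f x₀
  · exact hmin hy
  · exact hx.trans (not_le.1 hy).le

lemma IsCTransform.bddBelow (h : IsCTransform φ ψ) (x : X) {s : ℝ} (hs0 : 0 < s) (hs1 : s ≤ 1) :
    BddBelow {v : ℝ | ∃ y : X, v = dist x y ^ 2 / (2 * s) - ψ y} := by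
  refine ⟨φ x, ?_⟩
  rintro v ⟨y, rfl⟩
  have hle : dist x y ^ 2 / 2 ≤ dist x y ^ 2 / (2 * s) :=
    div_le_div_of_nonneg_left (by positivity) (by positivity) (by linarith)
  have := h.le y x
  rw [dist_comm] at this
  linarith

/-- Since `s < 1`, the growth of `d(x,·)²/(2s)` beats `-ψ ≥ φ x - d(x,·)²/2`, so sublevel sets
are bounded. -/
lemma IsCTransform.exists_forall_sq_div_sub_le [ProperSpace X] (h : IsCTransform φ ψ) (x : X)
    {s : ℝ} (hs0 : 0 < s) (hs1 : s < 1) :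
    ∃ y₀ : X, ∀ y : X, dist x y₀ ^ 2 / (2 * s) - ψ y₀ ≤ dist x y ^ 2 / (2 * s) - ψ y := by
  set f : X → ℝ := fun y => dist x y ^ 2 / (2 * s) - ψ y
  have hf : LowerSemicontinuous f :=
    (continuous_const.dist continuous_id |>.pow 2 |>.div_const _).lowerSemicontinuous.add
      h.upperSemicontinuous.neg
  refine hf.exists_forall_le_of_isBounded x ?_
  set A := (f x - φ x) * (2 * s) / (1 - s)
  refine (Metric.isBounded_closedBall (x := x) (r := Real.sqrt A)).subset fun y hy => ?_
  have h1s : 0 < 1 - s := sub_pos.2 hs1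
  have hgrowth : dist x y ^ 2 * (1 - s) / (2 * s) + φ x ≤ f y := by
    have := h.le y x
    have e : dist x y ^ 2 / (2 * s) - dist x y ^ 2 / 2 = dist x y ^ 2 * (1 - s) / (2 * s) := by
      field_simp
    simp only [f]
    rw [dist_comm y x] at this
    linarith
  have hA : dist y x ^ 2 ≤ A := by
    rw [le_div_iff₀ h1s, dist_comm]
    have := (div_le_iff₀ (by positivity : (0 : ℝ) < 2 * s)).1
      (show dist x y ^ 2 * (1 - s) / (2 * s) ≤ f x - φ x by have : f y ≤ f x := hy; linarith)
    linarith
  simpa [Metric.mem_closedBall, abs_of_nonneg dist_nonneg] using Real.abs_le_sqrt hA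

end Metric

section Potentials

variable {X : Type*} [MetricSpace X] {φ φc : X → ℝ} {t : ℝ}

lemma interpPotential_le_reversePotential (hφ : IsCTransform φc φ) (ht0 : 0 < t) (ht1 : t < 1)
    (x : X) : interpPotential φ t x ≤ reversePotential φc t x := by
  rw [interpPotential, if_neg ht0.ne', reversePotential, if_neg ht1.ne]
  refine le_csInf ⟨_, x, rfl⟩ ?_
  rintro _ ⟨z, rfl⟩
  rw [neg_le]
  refine le_csInf ⟨_, x, rfl⟩ ?_
  rintro _ ⟨y, rfl⟩
  have hpot := hφ.le y z
  have hsq := pow_le_pow_left₀ dist_nonneg (dist_triangle_left y z x) 2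
  have := add_sq_div_two_le (a := dist x y) (b := dist x z) ht0 ht1
  linarith

lemma IsKantorovichGeodesic.interpPotential_eq (hpair : IsKantorovichPair φ φc) {γ : ℝ → X}
    (hγ : IsKantorovichGeodesic φ φc γ) (ht0 : 0 < t) (ht1 : t < 1) :
    interpPotential φ t (γ t) = reversePotential φc t (γ t) := by
  obtain ⟨hφc, hφ⟩ := hpair
  obtain ⟨hgeod, hcost⟩ := hγ
  have h1t : 0 < 1 - t := sub_pos.2 ht1
  refine le_antisymm (interpPotential_le_reversePotential hφ ht0 ht1 _) ?_
  have hmem : t ∈ Icc (0 : ℝ) 1 := ⟨ht0.le, ht1.le⟩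
  have hdist0 : dist (γ t) (γ 0) = t * dist (γ 0) (γ 1) := by
    rw [hgeod t hmem 0 (left_mem_Icc.2 zero_le_one), sub_zero, abs_of_pos ht0]
  have hdist1 : dist (γ t) (γ 1) = (1 - t) * dist (γ 0) (γ 1) := by
    rw [hgeod t hmem 1 (right_mem_Icc.2 zero_le_one), abs_sub_comm, abs_of_pos h1t]
  rw [interpPotential, if_neg ht0.ne', reversePotential, if_neg ht1.ne]
  have h0 := csInf_le (hφ.bddBelow (γ t) ht0 ht1.le) ⟨γ 0, rfl⟩
  have h1 := csInf_le (hφc.bddBelow (γ t) h1t (by linarith)) ⟨γ 1, rfl⟩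
  rw [hdist0] at h0
  rw [hdist1] at h1
  have := sq_mul_div_add_sq_mul_div (dist (γ 0) (γ 1)) t
  linarith

lemma exists_isKantorovichGeodesic_of_interpPotential_eq [ProperSpace X]
    (hgeo : IsGeodesicSpace X) (hpair : IsKantorovichPair φ φc) (ht0 : 0 < t) (ht1 : t < 1)
    {x : X} (heq : interpPotential φ t x = reversePotential φc t x) :
    ∃ γ : ℝ → X, IsKantorovichGeodesic φ φc γ ∧ γ t = x := by
  obtain ⟨hφc, hφ⟩ := hpair
  have h1t : 0 < 1 - t := sub_pos.2 ht1
  obtain ⟨y, hy⟩ := hφ.exists_forall_sq_div_sub_le x ht0 ht1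
  obtain ⟨z, hz⟩ := hφc.exists_forall_sq_div_sub_le x h1t (sub_lt_self 1 ht0)
  have hleast_y : IsLeast {v : ℝ | ∃ y' : X, v = dist x y' ^ 2 / (2 * t) - φ y'}
      (dist x y ^ 2 / (2 * t) - φ y) := ⟨⟨y, rfl⟩, by rintro _ ⟨y', rfl⟩; exact hy y'⟩
  have hleast_z : IsLeast {v : ℝ | ∃ z' : X, v = dist x z' ^ 2 / (2 * (1 - t)) - φc z'}
      (dist x z ^ 2 / (2 * (1 - t)) - φc z) := ⟨⟨z, rfl⟩, by rintro _ ⟨z', rfl⟩; exact hz z'⟩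
  rw [interpPotential, if_neg ht0.ne', reversePotential, if_neg ht1.ne, hleast_y.csInf_eq,
    hleast_z.csInf_eq] at heq
  obtain ⟨hxy, hxz⟩ := eq_mul_of_sq_div_add_sq_div_le ht0 ht1 dist_nonneg dist_nonneg dist_nonneg
    (dist_triangle_left y z x) (by linarith [hφ.le y z])
  obtain ⟨γ, hγ, hγ0, hγ1, hγt⟩ := hgeo.exists_geodesic_apply_eq ht0 ht1 hxy hxz
  refine ⟨γ, ⟨hγ, ?_⟩, hγt⟩
  rw [hγ0, hγ1]
  rw [hxy, hxz] at heq
  have := sq_mul_div_add_sq_mul_div (dist y z) t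
  linarith

end Potentials

/-- On a proper geodesic space, for `t ∈ (0,1)`: `φ_t ≤ φ̄_t` everywhere, with equality at
`x` iff `x` is the `t`-point of some `φ`-Kantorovich geodesic. -/
theorem statement2 {X : Type*} [MetricSpace X] [ProperSpace X]
    (hgeo : IsGeodesicSpace X) (φ φc : X → ℝ) (hpair : IsKantorovichPair φ φc)
    (t : ℝ) (ht : t ∈ Set.Ioo (0:ℝ) 1) :
    (∀ x : X, interpPotential φ t x ≤ reversePotential φc t x) ∧
      (∀ x : X, interpPotential φ t x = reversePotential φc t x ↔
        ∃ γ : ℝ → X, IsKantorovichGeodesic φ φc γ ∧ γ t = x) := by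
  obtain ⟨ht0, ht1⟩ := ht
  refine ⟨interpPotential_le_reversePotential hpair.2 ht0 ht1, fun x =>
    ⟨exists_isKantorovichGeodesic_of_interpPotential_eq hgeo hpair ht0 ht1, ?_⟩⟩
  rintro ⟨γ, hγ, rfl⟩
  exact hγ.interpPotential_eq hpair ht0 ht1
end

section
/- Let (X,d) be a proper geodesic metric space and φ : X → ℝ a Kantorovich potential. Let t, s ∈ (0,1) and let γ¹, γ² be φ-Kantorovich geodesics with γ¹_t = γ²_s. Then |√(t(1−t))·ℓ(γ¹) − √(s(1−s))·ℓ(γ²)| ≤ √(ℓ(γ¹)·ℓ(γ²))·|√(t(1−s)) − √(s(1−t))|. -/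
/-- On a proper geodesic space, if `γ¹_t = γ²_s` for `φ`-Kantorovich geodesics `γ¹, γ²`
and `t, s ∈ (0,1)`, then
`|√(t(1-t))·ℓ(γ¹) - √(s(1-s))·ℓ(γ²)| ≤ √(ℓ(γ¹)·ℓ(γ²))·|√(t(1-s)) - √(s(1-t))|`. -/
theorem statement4 {X : Type*} [MetricSpace X] [ProperSpace X]
    (hgeo : IsGeodesicSpace X) (φ φc : X → ℝ) (hpair : IsKantorovichPair φ φc)
    (t s : ℝ) (ht : t ∈ Set.Ioo (0:ℝ) 1) (hs : s ∈ Set.Ioo (0:ℝ) 1)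
    (γ₁ γ₂ : ℝ → X) (h₁ : IsKantorovichGeodesic φ φc γ₁)
    (h₂ : IsKantorovichGeodesic φ φc γ₂) (hmeet : γ₁ t = γ₂ s) :
    |Real.sqrt (t * (1 - t)) * dist (γ₁ 0) (γ₁ 1)
        - Real.sqrt (s * (1 - s)) * dist (γ₂ 0) (γ₂ 1)|
      ≤ Real.sqrt (dist (γ₁ 0) (γ₁ 1) * dist (γ₂ 0) (γ₂ 1)) *
          |Real.sqrt (t * (1 - s)) - Real.sqrt (s * (1 - t))| := by
  obtain ⟨ht0, ht1⟩ := ht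
  obtain ⟨hs0, hs1⟩ := hs
  obtain ⟨hg1, he1⟩ := h₁
  obtain ⟨hg2, he2⟩ := h₂
  have hℓ₁ : (0:ℝ) ≤ dist (γ₁ 0) (γ₁ 1) := dist_nonneg
  have hℓ₂ : (0:ℝ) ≤ dist (γ₂ 0) (γ₂ 1) := dist_nonneg
  have hd1 : dist (γ₁ 0) (γ₁ t) = t * dist (γ₁ 0) (γ₁ 1) := by
    rw [hg1 0 ⟨le_refl 0, zero_le_one⟩ t ⟨ht0.le, ht1.le⟩, abs_of_nonpos (by linarith)]
    ring
  have hd2 : dist (γ₁ t) (γ₁ 1) = (1 - t) * dist (γ₁ 0) (γ₁ 1) := by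
    rw [hg1 t ⟨ht0.le, ht1.le⟩ 1 ⟨zero_le_one, le_refl 1⟩, abs_of_nonpos (by linarith)]
    ring
  have hd3 : dist (γ₂ 0) (γ₂ s) = s * dist (γ₂ 0) (γ₂ 1) := by
    rw [hg2 0 ⟨le_refl 0, zero_le_one⟩ s ⟨hs0.le, hs1.le⟩, abs_of_nonpos (by linarith)]
    ring
  have hd4 : dist (γ₂ s) (γ₂ 1) = (1 - s) * dist (γ₂ 0) (γ₂ 1) := by
    rw [hg2 s ⟨hs0.le, hs1.le⟩ 1 ⟨zero_le_one, le_refl 1⟩, abs_of_nonpos (by linarith)]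
    ring
  have hφ : ∀ x y : X, φ x + φc y ≤ dist x y ^ 2 / 2 := by
    intro x y
    have h := (hpair.2 x).1 ⟨y, rfl⟩
    linarith
  have hcross1 := hφ (γ₁ 0) (γ₂ 1)
  have hcross2 := hφ (γ₂ 0) (γ₁ 1)
  have htri1 : dist (γ₁ 0) (γ₂ 1)
      ≤ t * dist (γ₁ 0) (γ₁ 1) + (1 - s) * dist (γ₂ 0) (γ₂ 1) := by
    calc dist (γ₁ 0) (γ₂ 1) ≤ dist (γ₁ 0) (γ₁ t) + dist (γ₁ t) (γ₂ 1) := dist_triangle _ _ _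
      _ = t * dist (γ₁ 0) (γ₁ 1) + (1 - s) * dist (γ₂ 0) (γ₂ 1) := by
          rw [hd1, hmeet, hd4]
  have htri2 : dist (γ₂ 0) (γ₁ 1)
      ≤ s * dist (γ₂ 0) (γ₂ 1) + (1 - t) * dist (γ₁ 0) (γ₁ 1) := by
    calc dist (γ₂ 0) (γ₁ 1) ≤ dist (γ₂ 0) (γ₂ s) + dist (γ₂ s) (γ₁ 1) := dist_triangle _ _ _
      _ = s * dist (γ₂ 0) (γ₂ 1) + (1 - t) * dist (γ₁ 0) (γ₁ 1) := by
          rw [hd3, ← hmeet, hd2]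
  have hsq1 := pow_le_pow_left₀ dist_nonneg htri1 2
  have hsq2 := pow_le_pow_left₀ dist_nonneg htri2 2
  set L1 := dist (γ₁ 0) (γ₁ 1)
  set L2 := dist (γ₂ 0) (γ₂ 1)
  have hsum : L1 ^ 2 + L2 ^ 2
      ≤ (t * L1 + (1 - s) * L2) ^ 2 + (s * L2 + (1 - t) * L1) ^ 2 := by
    linarith [hcross1, hcross2, he1, he2, hsq1, hsq2]
  have key : t * (1 - t) * L1 ^ 2 + s * (1 - s) * L2 ^ 2
      ≤ (t * (1 - s) + s * (1 - t)) * (L1 * L2) := by nlinarith [hsum]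
  have ha : Real.sqrt (t * (1 - t)) ^ 2 = t * (1 - t) :=
    Real.sq_sqrt (mul_nonneg ht0.le (by linarith))
  have hb : Real.sqrt (s * (1 - s)) ^ 2 = s * (1 - s) :=
    Real.sq_sqrt (mul_nonneg hs0.le (by linarith))
  have hc : Real.sqrt (t * (1 - s)) ^ 2 = t * (1 - s) :=
    Real.sq_sqrt (mul_nonneg ht0.le (by linarith))
  have he : Real.sqrt (s * (1 - t)) ^ 2 = s * (1 - t) :=
    Real.sq_sqrt (mul_nonneg hs0.le (by linarith))
  have hL : Real.sqrt (L1 * L2) ^ 2 = L1 * L2 :=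
    Real.sq_sqrt (mul_nonneg hℓ₁ hℓ₂)
  have hce : Real.sqrt (t * (1 - s)) * Real.sqrt (s * (1 - t))
      = Real.sqrt (t * (1 - t)) * Real.sqrt (s * (1 - s)) := by
    rw [← Real.sqrt_mul (mul_nonneg ht0.le (by linarith)),
      ← Real.sqrt_mul (mul_nonneg ht0.le (by linarith))]
    congr 1
    ring
  have hexp1 : (Real.sqrt (t * (1 - t)) * L1 - Real.sqrt (s * (1 - s)) * L2) ^ 2
      = t * (1 - t) * L1 ^ 2 + s * (1 - s) * L2 ^ 2
        - 2 * (Real.sqrt (t * (1 - t)) * Real.sqrt (s * (1 - s))) * (L1 * L2) := by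
    linear_combination L1 ^ 2 * ha + L2 ^ 2 * hb
  have hexp2 : (L1 * L2) * (Real.sqrt (t * (1 - s)) - Real.sqrt (s * (1 - t))) ^ 2
      = (t * (1 - s) + s * (1 - t)) * (L1 * L2)
        - 2 * (Real.sqrt (t * (1 - t)) * Real.sqrt (s * (1 - s))) * (L1 * L2) := by
    linear_combination (L1 * L2) * hc + (L1 * L2) * he - 2 * (L1 * L2) * hce
  have hgoal : (Real.sqrt (t * (1 - t)) * L1 - Real.sqrt (s * (1 - s)) * L2) ^ 2
      ≤ (Real.sqrt (L1 * L2) *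
          |Real.sqrt (t * (1 - s)) - Real.sqrt (s * (1 - t))|) ^ 2 := by
    have hrhs : (Real.sqrt (L1 * L2) *
        |Real.sqrt (t * (1 - s)) - Real.sqrt (s * (1 - t))|) ^ 2
        = (L1 * L2) * (Real.sqrt (t * (1 - s)) - Real.sqrt (s * (1 - t))) ^ 2 := by
      rw [mul_pow, sq_abs, hL]
    rw [hrhs, hexp1, hexp2]
    linarith [key]
  have h := Real.sqrt_le_sqrt hgoal
  rwa [Real.sqrt_sq_eq_abs, Real.sqrt_sq (by positivity)] at h
end

section
/- Let (X,d) be a proper geodesic metric space and φ : X → ℝ a Kantorovich potential. Let γ¹, γ² be φ-Kantorovich geodesics and 0 < t₁ < t₂ < 1 with γ¹_{t₁} = γ²_{t₂} = x. Then for every s ∈ (0,1): φ_s(γ²_s) − φ_s(γ¹_s) ≥ 2·min(s/t₂, (1−s)/(1−t₁))·(φ_{t₂}(x) − φ_{t₁}(x)) ≥ 0. Moreover, φ_s(γ²_s) − φ_s(γ¹_s) > 0 if and only if φ(x) + φ^c(x) ≠ 0. -/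
open Set

lemma IsCTransform.add_le {X : Type*} [MetricSpace X] {φ ψ : X → ℝ} (h : IsCTransform φ ψ)
    (y z : X) : φ y + ψ z ≤ dist y z ^ 2 / 2 := by
  have := (h z).1 ⟨y, rfl⟩
  rw [dist_comm] at this
  linarith

lemma nonneg_and_nonneg_of_mul_nonneg {X Y α β : ℝ} (hα : 0 < α) (hβ : 0 < β)
    (hXY : 0 ≤ X * Y) (h : 0 ≤ α * X + β * Y) : 0 ≤ X ∧ 0 ≤ Y := by
  constructor <;> by_contra! hneg
  · nlinarith [nonpos_of_mul_nonneg_right hXY hneg]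
  · nlinarith [nonpos_of_mul_nonneg_left hXY hneg]

/-- An affine function that is nonnegative at `0` and `1` and at least `K` at `p / (p + q)`
dominates the tent of height `K` over `[0, 1]` peaking there. -/
lemma min_div_mul_le_add_mul {p q α β K s : ℝ} (hp : 0 < p) (hq : 0 < q) (hs₀ : 0 ≤ s)
    (hs₁ : s ≤ 1) (h₀ : 0 ≤ α) (h₁ : 0 ≤ α + β) (hmid : K ≤ (p + q) * α + p * β) :
    min (s / p) ((1 - s) / q) * K ≤ α + β * s := by
  rcases le_total (s / p) ((1 - s) / q) with hm | hm
  · rw [min_eq_left hm, div_mul_eq_mul_div, div_le_iff₀ hp]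
    rw [div_le_div_iff₀ hp hq] at hm
    nlinarith [mul_le_mul_of_nonneg_left hmid hs₀]
  · rw [min_eq_right hm, div_mul_eq_mul_div, div_le_iff₀ hq]
    rw [div_le_div_iff₀ hq hp] at hm
    nlinarith [mul_le_mul_of_nonneg_left hmid (sub_nonneg.2 hs₁)]

section CrossingBounds

variable {t₁ t₂ a b u v : ℝ}

lemma crossing_order (ht₁ : 0 < t₁) (ht₁₂ : t₁ < t₂) (ht₂ : t₂ < 1) (ha : 0 ≤ a)
    (h₁₂ : 2 * (v - u) ≤ (t₂ * b + (1 - t₁) * a) ^ 2 - a ^ 2)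
    (h₂₁ : 2 * (u - v) ≤ (t₁ * a + (1 - t₂) * b) ^ 2 - b ^ 2) :
    t₁ * a ≤ t₂ * b ∧ (1 - t₂) * b ≤ (1 - t₁) * a := by
  -- `h₁₂ + h₂₁` is twice `hprod`, and the combination in `hcomb` equals `(t₂ - t₁) a`
  have hprod : 0 ≤ (t₂ * b - t₁ * a) * ((1 - t₁) * a - (1 - t₂) * b) := by
    nlinarith
  have hcomb : 0 ≤ (1 - t₂) * (t₂ * b - t₁ * a) + t₂ * ((1 - t₁) * a - (1 - t₂) * b) := by
    nlinarith
  obtain ⟨hX, hY⟩ :=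
    nonneg_and_nonneg_of_mul_nonneg (by linarith) (by linarith) hprod hcomb
  exact ⟨by linarith, by linarith⟩

lemma le_two_mul_crossing_gap (ht₁ : 0 ≤ t₁) (ht₂ : t₂ ≤ 1)
    (h₂₁ : 2 * (u - v) ≤ (t₁ * a + (1 - t₂) * b) ^ 2 - b ^ 2) :
    (t₂ - t₁) * (t₁ * a ^ 2 + (1 - t₂) * b ^ 2) ≤
      2 * (v - t₂ * b ^ 2 / 2 - (u - t₁ * a ^ 2 / 2)) := by
  -- `(t₁ a + (1 - t₂) b)² = (1 + t₁ - t₂)(t₁ a² + (1 - t₂) b²) - t₁ (1 - t₂)(a - b)²`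
  nlinarith [mul_nonneg (mul_nonneg ht₁ (sub_nonneg.2 ht₂)) (sq_nonneg (a - b))]

lemma crossing_gap_nonneg (ht₁ : 0 ≤ t₁) (ht₁₂ : t₁ ≤ t₂) (ht₂ : t₂ ≤ 1)
    (h₂₁ : 2 * (u - v) ≤ (t₁ * a + (1 - t₂) * b) ^ 2 - b ^ 2) :
    0 ≤ v - t₂ * b ^ 2 / 2 - (u - t₁ * a ^ 2 / 2) := by
  nlinarith [le_two_mul_crossing_gap ht₁ ht₂ h₂₁, mul_nonneg (sub_nonneg.2 ht₁₂)
    (add_nonneg (mul_nonneg ht₁ (sq_nonneg a)) (mul_nonneg (sub_nonneg.2 ht₂) (sq_nonneg b)))]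

lemma min_mul_crossing_gap_le (ht₁ : 0 < t₁) (ht₁₂ : t₁ < t₂) (ht₂ : t₂ < 1) (ha : 0 ≤ a)
    (hb : 0 ≤ b) {s : ℝ} (hs₀ : 0 ≤ s) (hs₁ : s ≤ 1)
    (h₁₂ : 2 * (v - u) ≤ (t₂ * b + (1 - t₁) * a) ^ 2 - a ^ 2)
    (h₂₁ : 2 * (u - v) ≤ (t₁ * a + (1 - t₂) * b) ^ 2 - b ^ 2) :
    2 * min (s / t₂) ((1 - s) / (1 - t₁)) * (v - t₂ * b ^ 2 / 2 - (u - t₁ * a ^ 2 / 2)) ≤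
      v - s * b ^ 2 / 2 - (u - s * a ^ 2 / 2) := by
  have ht₂₀ : 0 < t₂ := ht₁.trans ht₁₂
  have ht₁₁ : 0 < 1 - t₁ := by linarith
  have hw : 0 ≤ 1 + t₁ - t₂ := by linarith
  obtain ⟨hX, hY⟩ := crossing_order ht₁ ht₁₂ ht₂ ha h₁₂ h₂₁
  have hc : 0 ≤ t₁ * a + (1 - t₂) * b :=
    add_nonneg (mul_nonneg ht₁.le ha) (mul_nonneg (by linarith) hb)
  have h₀ : 0 ≤ v - u := by
    nlinarith [mul_nonneg (by linarith : 0 ≤ b - (t₁ * a + (1 - t₂) * b))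
      (by linarith : 0 ≤ b + (t₁ * a + (1 - t₂) * b))]
  have h₁ : 0 ≤ v - u + (a ^ 2 - b ^ 2) / 2 := by
    nlinarith [mul_nonneg (by linarith : 0 ≤ a - (t₁ * a + (1 - t₂) * b))
      (by linarith : 0 ≤ a + (t₁ * a + (1 - t₂) * b))]
  -- `(t₂ b + (1 - t₁) a)² = (1 + t₂ - t₁)(t₂ b² + (1 - t₁) a²) - t₂ (1 - t₁)(a - b)²`
  -- and `(1 + t₁ - t₂)(1 + t₂ - t₁) = 1 - (t₂ - t₁)²`
  have hmid : 2 * (v - t₂ * b ^ 2 / 2 - (u - t₁ * a ^ 2 / 2)) ≤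
      (t₂ + (1 - t₁)) * (v - u) + t₂ * ((a ^ 2 - b ^ 2) / 2) := by
    nlinarith [mul_nonneg hw (sub_nonneg.2 h₁₂),
      mul_nonneg (sq_nonneg (t₂ - t₁))
        (add_nonneg (mul_nonneg ht₂₀.le (sq_nonneg b)) (mul_nonneg ht₁₁.le (sq_nonneg a))),
      mul_nonneg (mul_nonneg hw (mul_nonneg ht₂₀.le ht₁₁.le)) (sq_nonneg (a - b))]
  have := min_div_mul_le_add_mul ht₂₀ ht₁₁ hs₀ hs₁ h₀ h₁ hmid
  linarith

lemma crossing_gap_pos_iff (ht₁ : 0 < t₁) (ht₁₂ : t₁ < t₂) (ht₂ : t₂ < 1) (ha : 0 ≤ a)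
    (hb : 0 ≤ b) {s : ℝ} (hs : s ∈ Ioo (0 : ℝ) 1) (hab : a = 0 → b = 0)
    (h₁₂ : 2 * (v - u) ≤ (t₂ * b + (1 - t₁) * a) ^ 2 - a ^ 2)
    (h₂₁ : 2 * (u - v) ≤ (t₁ * a + (1 - t₂) * b) ^ 2 - b ^ 2) :
    0 < v - s * b ^ 2 / 2 - (u - s * a ^ 2 / 2) ↔ a ≠ 0 := by
  refine ⟨fun hpos ha₀ ↦ ?_, fun ha₀ ↦ ?_⟩
  · rw [ha₀, hab ha₀] at h₁₂ hpos
    norm_num at h₁₂ hpos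
    linarith
  · have hZ : 0 < (t₂ - t₁) * (t₁ * a ^ 2 + (1 - t₂) * b ^ 2) :=
      mul_pos (sub_pos.2 ht₁₂) (add_pos_of_pos_of_nonneg (mul_pos ht₁ (pow_pos (ha.lt_of_ne' ha₀) 2))
        (mul_nonneg (sub_nonneg.2 ht₂.le) (sq_nonneg b)))
    have hD : 0 < v - t₂ * b ^ 2 / 2 - (u - t₁ * a ^ 2 / 2) := by
      linarith [le_two_mul_crossing_gap ht₁.le ht₂.le h₂₁]
    have hm : 0 < 2 * min (s / t₂) ((1 - s) / (1 - t₁)) :=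
      mul_pos two_pos
        (lt_min (div_pos hs.1 (ht₁.trans ht₁₂)) (div_pos (sub_pos.2 hs.2) (by linarith)))
    linarith [mul_pos hm hD, min_mul_crossing_gap_le ht₁ ht₁₂ ht₂ ha hb hs.1.le hs.2.le h₁₂ h₂₁]

end CrossingBounds

section Geodesics

variable {X : Type*} [MetricSpace X] {φ φc : X → ℝ} {γ γ' : ℝ → X} {t t' : ℝ}

lemma IsGeodesic.dist_zero_apply (hγ : IsGeodesic γ) (ht : t ∈ Icc (0 : ℝ) 1) :
    dist (γ 0) (γ t) = t * dist (γ 0) (γ 1) := by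
  rw [hγ 0 (left_mem_Icc.2 zero_le_one) t ht, zero_sub, abs_neg, abs_of_nonneg ht.1]

lemma IsGeodesic.dist_apply_one (hγ : IsGeodesic γ) (ht : t ∈ Icc (0 : ℝ) 1) :
    dist (γ t) (γ 1) = (1 - t) * dist (γ 0) (γ 1) := by
  rw [hγ t ht 1 (right_mem_Icc.2 zero_le_one), abs_sub_comm, abs_of_nonneg (sub_nonneg.2 ht.2)]

namespace IsKantorovichGeodesic

lemma interpPotential_apply (hφ : IsCTransform φ φc) (hγ : IsKantorovichGeodesic φ φc γ)
    {r : ℝ} (hr₀ : 0 < r) (hr₁ : r ≤ 1) :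
    interpPotential φ r (γ r) = φ (γ 0) - r * dist (γ 0) (γ 1) ^ 2 / 2 := by
  set ℓ := dist (γ 0) (γ 1)
  have hr : r ∈ Icc (0 : ℝ) 1 := ⟨hr₀.le, hr₁⟩
  have h₀ : dist (γ r) (γ 0) = r * ℓ := by rw [dist_comm, hγ.1.dist_zero_apply hr]
  have hleast : IsLeast {v : ℝ | ∃ y : X, v = dist (γ r) y ^ 2 / (2 * r) - φ y}
      (r * ℓ ^ 2 / 2 - φ (γ 0)) := by
    refine ⟨⟨γ 0, by rw [h₀]; field_simp⟩, ?_⟩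
    rintro _ ⟨y, rfl⟩
    set d := dist (γ r) y
    have hφy := hφ.add_le y (γ 1)
    have htri : dist y (γ 1) ≤ d + (1 - r) * ℓ :=
      calc dist y (γ 1) ≤ dist y (γ r) + dist (γ r) (γ 1) := dist_triangle _ _ _
        _ = d + (1 - r) * ℓ := by rw [dist_comm y, hγ.1.dist_apply_one hr]
    have hsq := pow_le_pow_left₀ dist_nonneg htri 2
    -- `d² - r (d + (1-r)ℓ)² + r(1-r)ℓ² = (1-r)(d - rℓ)²`
    have key : (r * ℓ ^ 2 / 2 - φ (γ 0) + φ y) * (2 * r) ≤ d ^ 2 := by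
      nlinarith [hγ.2, mul_nonneg (sub_nonneg.2 hr₁) (sq_nonneg (d - r * ℓ))]
    rw [le_sub_iff_add_le, le_div_iff₀ (by positivity)]
    linarith
  rw [interpPotential, if_neg hr₀.ne', hleast.csInf_eq]
  ring

lemma add_apply_le (hφ : IsCTransform φ φc) (hγ : IsKantorovichGeodesic φ φc γ)
    (ht : t ∈ Icc (0 : ℝ) 1) :
    φ (γ t) + φc (γ t) ≤ -(t * (1 - t) * dist (γ 0) (γ 1) ^ 2) := by
  have h₀ := hφ.add_le (γ 0) (γ t)
  have h₁ := hφ.add_le (γ t) (γ 1)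
  rw [hγ.1.dist_zero_apply ht] at h₀
  rw [hγ.1.dist_apply_one ht] at h₁
  nlinarith [hγ.2]

lemma add_apply_eq_zero_iff (hφ : IsCTransform φ φc) (hγ : IsKantorovichGeodesic φ φc γ)
    (ht : t ∈ Ioo (0 : ℝ) 1) :
    φ (γ t) + φc (γ t) = 0 ↔ dist (γ 0) (γ 1) = 0 := by
  have ht' := Ioo_subset_Icc_self ht
  constructor
  · intro h
    have hle := hγ.add_apply_le hφ ht'
    have htt : 0 < t * (1 - t) := mul_pos ht.1 (sub_pos.2 ht.2)
    exact (pow_eq_zero_iff two_ne_zero).1 (le_antisymm (by nlinarith) (sq_nonneg _))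
  · intro h
    have h₀ : γ 0 = γ t := dist_eq_zero.1 (by rw [hγ.1.dist_zero_apply ht', h, mul_zero])
    have h₁ : γ t = γ 1 := dist_eq_zero.1 (by rw [hγ.1.dist_apply_one ht', h, mul_zero])
    have := hγ.2
    rw [h₀, ← h₁, dist_self] at this
    simpa using this

lemma two_mul_sub_le (hφ : IsCTransform φ φc) (hγ : IsKantorovichGeodesic φ φc γ)
    (hγ' : IsKantorovichGeodesic φ φc γ') (ht : t ∈ Icc (0 : ℝ) 1) (ht' : t' ∈ Icc (0 : ℝ) 1)
    (hx : γ t = γ' t') :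
    2 * (φ (γ' 0) - φ (γ 0)) ≤
      (t' * dist (γ' 0) (γ' 1) + (1 - t) * dist (γ 0) (γ 1)) ^ 2 - dist (γ 0) (γ 1) ^ 2 := by
  have htri : dist (γ' 0) (γ 1) ≤ t' * dist (γ' 0) (γ' 1) + (1 - t) * dist (γ 0) (γ 1) := by
    rw [← hγ'.1.dist_zero_apply ht', ← hγ.1.dist_apply_one ht, ← hx]
    exact dist_triangle _ _ _
  nlinarith [hφ.add_le (γ' 0) (γ 1), hγ.2, pow_le_pow_left₀ dist_nonneg htri 2]

end IsKantorovichGeodesic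

end Geodesics

theorem statement7_general {X : Type*} [MetricSpace X]
    (φ φc : X → ℝ) (hpair : IsKantorovichPair φ φc)
    (γ₁ γ₂ : ℝ → X) (h₁ : IsKantorovichGeodesic φ φc γ₁)
    (h₂ : IsKantorovichGeodesic φ φc γ₂)
    (t₁ t₂ : ℝ) (ht₁ : 0 < t₁) (ht₁₂ : t₁ < t₂) (ht₂ : t₂ < 1)
    (x : X) (hx₁ : γ₁ t₁ = x) (hx₂ : γ₂ t₂ = x)
    (s : ℝ) (hs : s ∈ Set.Ioo (0:ℝ) 1) :
    interpPotential φ s (γ₂ s) - interpPotential φ s (γ₁ s)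
        ≥ 2 * min (s / t₂) ((1 - s) / (1 - t₁)) *
            (interpPotential φ t₂ x - interpPotential φ t₁ x) ∧
      0 ≤ 2 * min (s / t₂) ((1 - s) / (1 - t₁)) *
            (interpPotential φ t₂ x - interpPotential φ t₁ x) ∧
      (0 < interpPotential φ s (γ₂ s) - interpPotential φ s (γ₁ s) ↔
        φ x + φc x ≠ 0) := by
  have hφ := hpair.1
  have ht₁' : t₁ ∈ Ioo (0 : ℝ) 1 := ⟨ht₁, ht₁₂.trans ht₂⟩
  have ht₂' : t₂ ∈ Ioo (0 : ℝ) 1 := ⟨ht₁.trans ht₁₂, ht₂⟩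
  have h₁₂ := h₁.two_mul_sub_le hφ h₂ (Ioo_subset_Icc_self ht₁') (Ioo_subset_Icc_self ht₂')
    (hx₁.trans hx₂.symm)
  have h₂₁ := h₂.two_mul_sub_le hφ h₁ (Ioo_subset_Icc_self ht₂') (Ioo_subset_Icc_self ht₁')
    (hx₂.trans hx₁.symm)
  have hxa := hx₁ ▸ h₁.add_apply_eq_zero_iff hφ ht₁'
  have hxb := hx₂ ▸ h₂.add_apply_eq_zero_iff hφ ht₂'
  have hI₁ := hx₁ ▸ h₁.interpPotential_apply hφ ht₁ ht₁'.2.le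
  have hI₂ := hx₂ ▸ h₂.interpPotential_apply hφ ht₂'.1 ht₂.le
  rw [Ne, hxa, hI₁, hI₂, h₁.interpPotential_apply hφ hs.1 hs.2.le,
    h₂.interpPotential_apply hφ hs.1 hs.2.le]
  have hm : 0 ≤ 2 * min (s / t₂) ((1 - s) / (1 - t₁)) :=
    mul_nonneg zero_le_two (le_min (div_nonneg hs.1.le ht₂'.1.le)
      (div_nonneg (sub_nonneg.2 hs.2.le) (sub_nonneg.2 ht₁'.2.le)))
  refine ⟨min_mul_crossing_gap_le ht₁ ht₁₂ ht₂ dist_nonneg dist_nonneg hs.1.le hs.2.le h₁₂ h₂₁,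
    mul_nonneg hm (crossing_gap_nonneg ht₁.le ht₁₂.le ht₂.le h₂₁),
    crossing_gap_pos_iff ht₁ ht₁₂ ht₂ dist_nonneg dist_nonneg hs (fun h ↦ hxb.1 (hxa.2 h)) h₁₂ h₂₁⟩

/-- On a proper geodesic space, if `γ¹_{t₁} = γ²_{t₂} = x` for `φ`-Kantorovich geodesics
and `0 < t₁ < t₂ < 1`, then for every `s ∈ (0,1)`:
`φ_s(γ²_s) - φ_s(γ¹_s) ≥ 2·min(s/t₂, (1-s)/(1-t₁))·(φ_{t₂}(x) - φ_{t₁}(x)) ≥ 0`,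
and the left-hand side is strictly positive iff `φ(x) + φ^c(x) ≠ 0`. -/
theorem statement7 {X : Type*} [MetricSpace X] [ProperSpace X]
    (hgeo : IsGeodesicSpace X) (φ φc : X → ℝ) (hpair : IsKantorovichPair φ φc)
    (γ₁ γ₂ : ℝ → X) (h₁ : IsKantorovichGeodesic φ φc γ₁)
    (h₂ : IsKantorovichGeodesic φ φc γ₂)
    (t₁ t₂ : ℝ) (ht₁ : 0 < t₁) (ht₁₂ : t₁ < t₂) (ht₂ : t₂ < 1)
    (x : X) (hx₁ : γ₁ t₁ = x) (hx₂ : γ₂ t₂ = x)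
    (s : ℝ) (hs : s ∈ Set.Ioo (0:ℝ) 1) :
    interpPotential φ s (γ₂ s) - interpPotential φ s (γ₁ s)
        ≥ 2 * min (s / t₂) ((1 - s) / (1 - t₁)) *
            (interpPotential φ t₂ x - interpPotential φ t₁ x) ∧
      0 ≤ 2 * min (s / t₂) ((1 - s) / (1 - t₁)) *
            (interpPotential φ t₂ x - interpPotential φ t₁ x) ∧
      (0 < interpPotential φ s (γ₂ s) - interpPotential φ s (γ₁ s) ↔
        φ x + φc x ≠ 0) :=
  statement7_general φ φc hpair γ₁ γ₂ h₁ h₂ t₁ t₂ ht₁ ht₁₂ ht₂ x hx₁ hx₂ s hs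
end

section
/- Let I ⊂ ℝ be an open interval containing 0 and let f : I → ℝ be C-semi-concave for some C ≥ 0, meaning that t ↦ f(t) − C·t²/2 is concave on I. Assume f ≥ 0 on I, f is differentiable at 0, and f(0) = f′(0) = 0. Let D ⊂ I be the set of differentiability points of f (a set of full measure). Then the lower derivative of f′ at 0 along D is ≥ −C, and moreover f′(t)/t ≥ −C for every t ∈ D with t ≠ 0 and 2t ∈ I. -/
/-- Let `f` be `C`-semi-concave on an open interval `(a,b) ∋ 0` (i.e. `t ↦ f(t) - C·t²/2`
is concave), `f ≥ 0`, `f(0) = f'(0) = 0`. Then the lower derivative of `f'` at `0` along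
the set `D` of differentiability points is `≥ -C`, and `f'(t)/t ≥ -C` for every
`t ∈ D`, `t ≠ 0`, with `2t ∈ (a,b)`. -/
theorem statement14 (a b C : ℝ) (ha : a < 0) (hb : 0 < b) (hC : 0 ≤ C)
    (f : ℝ → ℝ)
    (hconc : ConcaveOn ℝ (Set.Ioo a b) (fun t => f t - C * t ^ 2 / 2))
    (hnonneg : ∀ t ∈ Set.Ioo a b, 0 ≤ f t)
    (hderiv : HasDerivAt f 0 0) (hf0 : f 0 = 0) :
    -C ≤ Filter.liminf (fun t => deriv f t / t)
        (nhdsWithin 0 ((Set.Ioo a b ∩ {t | DifferentiableAt ℝ f t}) \ {0})) ∧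
      ∀ t ∈ Set.Ioo a b, DifferentiableAt ℝ f t → t ≠ 0 → 2 * t ∈ Set.Ioo a b →
        -C ≤ deriv f t / t := by
  set g : ℝ → ℝ := fun t => f t - C * t ^ 2 / 2 with hg
  have h0mem : (0 : ℝ) ∈ Set.Ioo a b := ⟨ha, hb⟩
  -- derivative of g at differentiability points of f
  have hquad : ∀ t : ℝ, HasDerivAt (fun t : ℝ => C * t ^ 2 / 2) (C * t) t := by
    intro t
    have := ((hasDerivAt_pow 2 t).const_mul C).div_const 2
    convert this using 1
    · rfl
    · rfl
    push_cast
    ring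
  have hgderiv : ∀ t : ℝ, DifferentiableAt ℝ f t →
      HasDerivAt g (deriv f t - C * t) t := by
    intro t ht
    exact ht.hasDerivAt.sub (hquad t)
  have hg0deriv : HasDerivAt g 0 0 := by
    have := hderiv.sub (hquad 0)
    simp only [mul_zero, sub_zero] at this
    exact this
  have hg00 : g 0 = 0 := by simp [hg, hf0]
  -- g ≤ 0 on Ioo a b
  have hgle : ∀ t ∈ Set.Ioo a b, g t ≤ 0 := by
    intro t ht
    rcases lt_trichotomy t 0 with htn | rfl | htp
    · have h1 := hconc.le_slope_of_hasDerivAt ht h0mem htn hg0deriv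
      rw [slope_def_field, hg00] at h1
      have : (0 - g t) / (0 - t) = g t / t := by
        rw [zero_sub, zero_sub, neg_div_neg_eq]
      rw [this] at h1
      have := mul_nonpos_of_nonneg_of_nonpos h1 htn.le
      rwa [div_mul_cancel₀ _ (ne_of_lt htn)] at this
    · exact le_of_eq hg00
    · have h1 := hconc.slope_le_of_hasDerivAt h0mem ht htp hg0deriv
      rw [slope_def_field, hg00, sub_zero, sub_zero] at h1
      have := mul_nonpos_of_nonpos_of_nonneg h1 htp.le
      rwa [div_mul_cancel₀ _ (ne_of_gt htp)] at this
  -- key pointwise bound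
  have hkey : ∀ t ∈ Set.Ioo a b, DifferentiableAt ℝ f t → t ≠ 0 → 2 * t ∈ Set.Ioo a b →
      -C ≤ deriv f t / t := by
    intro t ht hd hne h2t
    have hgd := hgderiv t hd
    have hft : g t ≤ 0 := hgle t ht
    have hf2t : 0 ≤ f (2 * t) := hnonneg _ h2t
    rcases hne.lt_or_gt with htn | htp
    · -- t < 0 : derivative at right endpoint of secant (2t, t)
      have h2lt : 2 * t < t := by linarith
      have h1 := hconc.le_slope_of_hasDerivAt h2t ht h2lt hgd
      rw [slope_def_field] at h1
      rw [le_div_iff_of_neg htn]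
      have hden : (0:ℝ) < t - 2 * t := by linarith
      have h2 : (deriv f t - C * t) * (t - 2 * t) ≤ g t - g (2 * t) :=
        (le_div_iff₀ hden).mp h1
      have hgt2 : -(C * (2 * t) ^ 2 / 2) ≤ g (2 * t) := by
        simp only [hg]; linarith
      by_contra hcon
      push_neg at hcon
      have hh := mul_lt_mul_of_neg_right hcon htn
      simp only [hg] at h2 hft hgt2
      nlinarith [hh, h2, hft, hgt2]
    · -- t > 0 : derivative at left endpoint of secant (t, 2t)
      have hlt2 : t < 2 * t := by linarith
      have h1 := hconc.slope_le_of_hasDerivAt ht h2t hlt2 hgd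
      rw [slope_def_field] at h1
      rw [le_div_iff₀ htp]
      have hden : (0:ℝ) < 2 * t - t := by linarith
      have h2 : g (2 * t) - g t ≤ (deriv f t - C * t) * (2 * t - t) :=
        (div_le_iff₀ hden).mp h1
      have hgt2 : -(C * (2 * t) ^ 2 / 2) ≤ g (2 * t) := by
        simp only [hg]; linarith
      by_contra hcon
      push_neg at hcon
      have hh := mul_lt_mul_of_pos_right hcon htp
      simp only [hg] at h2 hft hgt2
      nlinarith [hh, h2, hft, hgt2]
  refine ⟨?_, hkey⟩
  set l := nhdsWithin 0 ((Set.Ioo a b ∩ {t | DifferentiableAt ℝ f t}) \ {0}) with hl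
  -- eventual lower bound
  have hev_lb : ∀ᶠ t in l, -C ≤ deriv f t / t := by
    have hsmall : Set.Ioo (a / 2) (b / 2) ∈ nhds (0 : ℝ) :=
      Ioo_mem_nhds (by linarith) (by linarith)
    filter_upwards [self_mem_nhdsWithin, mem_nhdsWithin_of_mem_nhds hsmall] with t hts htsm
    obtain ⟨⟨ht1, ht2⟩, ht3⟩ := hts
    have hne : t ≠ 0 := by simpa using ht3
    refine hkey t ht1 ht2 hne ⟨?_, ?_⟩
    · have := htsm.1; linarith
    · have := htsm.2; linarith
  -- eventual upper bound
  have hev_ub : ∀ᶠ t in l, deriv f t / t ≤ C := by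
    filter_upwards [self_mem_nhdsWithin] with t hts
    obtain ⟨⟨ht1, ht2⟩, ht3⟩ := hts
    have hne : t ≠ 0 := by simpa using ht3
    have hgd := hgderiv t ht2
    have hft : g t ≤ 0 := hgle t ht1
    rcases hne.lt_or_gt with htn | htp
    · have h1 := hconc.slope_le_of_hasDerivAt ht1 h0mem htn hgd
      rw [slope_def_field, hg00] at h1
      have heq : (0 - g t) / (0 - t) = g t / t := by
        rw [zero_sub, zero_sub, neg_div_neg_eq]
      rw [heq] at h1
      have hgtt : 0 ≤ g t / t := div_nonneg_iff.mpr (Or.inr ⟨hft, htn.le⟩)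
      rw [div_le_iff_of_neg htn]
      linarith
    · have h1 := hconc.le_slope_of_hasDerivAt h0mem ht1 htp hgd
      rw [slope_def_field, hg00, sub_zero, sub_zero] at h1
      have hgtt : g t / t ≤ 0 := div_nonpos_of_nonpos_of_nonneg hft htp.le
      rw [div_le_iff₀ htp]
      linarith
  by_cases hbot : l = ⊥
  · rw [hbot]
    have : Filter.liminf (fun t => deriv f t / t) (⊥ : Filter ℝ) = 0 := by
      simp [Filter.liminf, Filter.limsInf, Real.sSup_univ]
    rw [this]
    linarith
  · haveI : l.NeBot := ⟨hbot⟩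
    refine Filter.le_liminf_of_le ?_ hev_lb
    exact Filter.IsBoundedUnder.isCoboundedUnder_ge ⟨C, by
      rwa [Filter.eventually_map]⟩
end
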